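/- Let Ω = ((Ψ_n, M_n, P_n))_{n∈ℕ} be an admissible module-sequence. Then the feature extractor Φ_Ω is Lipschitz-continuous with Lipschitz constant 1: for all f, h ∈ L²(ℝ^d), |||Φ_Ω(f) − Φ_Ω(h)||| := (Σ_{n≥0} Σ_{q∈Λ₁^n} ‖(U[q]f)∗χ_n − (U[q]h)∗χ_n‖₂²)^{1/2} ≤ ‖f − h‖₂. -/

import Mathlib

/-!
For one module, convolution is linear, so the frame bound applied to `F - H` controls the output
`‖(F - H) ∗ χ‖²` together with `Σ_λ ‖(F - H) ∗ g_λ‖²`, while the Lipschitz bounds and the fact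
that `x ↦ S^{d/2} u(S x)` is an isometry of `L²` give
`‖U[λ]F - U[λ]H‖ ≤ L R ‖(F - H) ∗ g_λ‖`. Hence the output energy plus the energy passed on to the
next layer is at most `max(1, L²R²) B ‖F - H‖² ≤ ‖F - H‖²`. Summed over all paths of length `n`,
this says that the output energy at depth `n` plus the energy at depth `n + 1` is at most the
energy at depth `n`, and telescoping from depth `0`, where the energy is `‖f - h‖²`, bounds the
total output energy.
-/

open MeasureTheory
open scoped ENNReal FourierTransform

noncomputable section

/-- ℝ^d as a Euclidean space. -/
abbrev Ed (d : ℕ) : Type := EuclideanSpace ℝ (Fin d)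

/-- Convolution (f ∗ g)(x) = ∫ f(y) g(x − y) dy. -/
def convol {d : ℕ} (f g : Ed d → ℂ) : Ed d → ℂ := fun x => ∫ y, f y * g (x - y)

/-- One network layer: U[λ]f = S^{d/2} · P(M(f ∗ g))(S·). -/
def layerU {d : ℕ} (S : ℝ) (P M : (Ed d → ℂ) → (Ed d → ℂ)) (g : Ed d → ℂ)
    (f : Ed d → ℂ) : Ed d → ℂ :=
  fun x => ((S ^ ((d : ℝ) / 2) : ℝ) : ℂ) * P (M (convol f g)) (S • x)

/-- Iterated layer operators along a path q = (λ₁, …, λ_n):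
U[q]f = U_n[λ_n] ⋯ U₁[λ₁] f. -/
def pathU {d : ℕ} (Λ : ℕ → Type) (g : (n : ℕ) → Λ n → Ed d → ℂ)
    (M P : ℕ → (Ed d → ℂ) → (Ed d → ℂ)) (S : ℕ → ℝ) (n : ℕ)
    (q : (k : Fin n) → Λ k.1) (f : Ed d → ℂ) : Ed d → ℂ :=
  Fin.foldl n (fun h k => layerU (S k.1) (P k.1) (M k.1) (g k.1 (q k)) h) f

theorem eLpNorm_rpow_smul_comp_smul {E F : Type*} [NormedAddCommGroup E] [NormedSpace ℝ E]
    [MeasurableSpace E] [BorelSpace E] [FiniteDimensional ℝ E] (μ : Measure E)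
    [μ.IsAddHaarMeasure] [NormedAddCommGroup F] [NormedSpace ℝ F] {p : ℝ≥0∞} (hp : p ≠ ∞)
    {r : ℝ} (hr : 0 < r) {G : E → F} (hG : AEStronglyMeasurable G μ) :
    eLpNorm (fun x => (r ^ ((Module.finrank ℝ E : ℝ) / p.toReal)) • G (r • x)) p μ
      = eLpNorm G p μ := by
  set n := Module.finrank ℝ E
  have hmap : μ.map (r • ·) = ENNReal.ofReal (r ^ (-(n : ℝ))) • μ := by
    rw [Measure.map_addHaar_smul μ hr.ne', abs_of_pos (by positivity), Real.rpow_neg hr.le,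
      Real.rpow_natCast]
  have hcomp : eLpNorm (fun x => G (r • x)) p μ = eLpNorm G p (μ.map (r • ·)) := by
    rw [eLpNorm_map_measure _ (measurable_const_smul r).aemeasurable]
    · rfl
    · rw [hmap]; exact hG.mono_ac Measure.smul_absolutelyContinuous
  change eLpNorm ((r ^ ((n : ℝ) / p.toReal)) • fun x => G (r • x)) p μ = _
  rw [eLpNorm_const_smul, hcomp, hmap, eLpNorm_smul_measure_of_ne_top hp, smul_eq_mul,
    ← mul_assoc, Real.enorm_of_nonneg (by positivity), ENNReal.ofReal_rpow_of_pos (by positivity),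
    ← ENNReal.ofReal_mul (by positivity), ← Real.rpow_mul hr.le, ← Real.rpow_add hr]
  simp [ENNReal.toReal_inv, div_eq_mul_inv]

theorem ENNReal.tsum_pi_fin_succ {n : ℕ} {α : Fin (n + 1) → Type*} (φ : (∀ i, α i) → ℝ≥0∞) :
    ∑' q, φ q = ∑' (q : ∀ i : Fin n, α i.castSucc) (a : α (Fin.last n)), φ (Fin.snoc q a) := by
  rw [← (Fin.snocEquiv α).tsum_eq, ENNReal.tsum_prod', ENNReal.tsum_comm]
  rfl

theorem ENNReal.tsum_le_of_add_le {a b : ℕ → ℝ≥0∞} (h : ∀ n, a n + b (n + 1) ≤ b n) :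
    ∑' n, a n ≤ b 0 := by
  have partial_le : ∀ N, ∑ n ∈ Finset.range N, a n + b N ≤ b 0 := by
    intro N
    induction N with
    | zero => simp
    | succ N ih =>
      rw [Finset.sum_range_succ, add_assoc]
      exact (add_le_add_right (h N) _).trans ih
  rw [ENNReal.tsum_eq_iSup_nat]
  exact iSup_le fun N => le_self_add.trans (partial_le N)

section Convolution

variable {d : ℕ}

theorem integrable_mul_comp_sub {f g : Ed d → ℂ} (hf : MemLp f 2 volume)
    (hg : MemLp g 2 volume) (x : Ed d) : Integrable (fun y => f y * g (x - y)) volume :=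
  hf.integrable_mul (q := 2)
    (hg.comp_measurePreserving (Measure.measurePreserving_sub_left volume x))

theorem sub_convol {f h k : Ed d → ℂ} (hf : MemLp f 2 volume) (hh : MemLp h 2 volume)
    (hk : MemLp k 2 volume) : convol (f - h) k = convol f k - convol h k := by
  funext x
  simp only [Pi.sub_apply, convol, sub_mul]
  exact integral_sub (integrable_mul_comp_sub hf hk x) (integrable_mul_comp_sub hh hk x)

theorem aestronglyMeasurable_convol {f g : Ed d → ℂ} (hf : AEStronglyMeasurable f volume)
    (hg : AEStronglyMeasurable g volume) : AEStronglyMeasurable (convol f g) volume :=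
  (hf.convolution_integrand (ContinuousLinearMap.mul ℝ ℂ) hg).integral_prod_right'

end Convolution

section Layer

variable {d : ℕ}

theorem eLpNorm_dilate {r : ℝ} (hr : 0 < r) {G : Ed d → ℂ}
    (hG : AEStronglyMeasurable G volume) :
    eLpNorm (fun x => ((r ^ ((d : ℝ) / 2) : ℝ) : ℂ) * G (r • x)) 2 volume
      = eLpNorm G 2 volume := by
  have h := eLpNorm_rpow_smul_comp_smul volume (p := 2) ENNReal.ofNat_ne_top hr hG
  rw [finrank_euclideanSpace_fin, ENNReal.toReal_ofNat] at h
  simpa only [Complex.real_smul] using h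

theorem memLp_layerU {S : ℝ} (hS : 0 < S) {P M : (Ed d → ℂ) → (Ed d → ℂ)} {g f : Ed d → ℂ}
    (h : MemLp (P (M (convol f g))) 2 volume) : MemLp (layerU S P M g f) 2 volume :=
  ⟨(h.1.comp_quasiMeasurePreserving (Measure.quasiMeasurePreserving_smul volume hS.ne')).const_smul
      (((S ^ ((d : ℝ) / 2) : ℝ) : ℂ)),
    (eLpNorm_dilate hS h.1).trans_lt h.2⟩

theorem eLpNorm_layerU_sub {S : ℝ} (hS : 0 < S) {P M : (Ed d → ℂ) → (Ed d → ℂ)}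
    {g F H : Ed d → ℂ} (hF : MemLp (P (M (convol F g))) 2 volume)
    (hH : MemLp (P (M (convol H g))) 2 volume) :
    eLpNorm (layerU S P M g F - layerU S P M g H) 2 volume
      = eLpNorm (P (M (convol F g)) - P (M (convol H g))) 2 volume := by
  rw [← eLpNorm_dilate hS (hF.sub hH).1]
  congr 1
  funext x
  simp only [Pi.sub_apply, layerU, mul_sub]

end Layer

/-- A module `(Ψ, M, P)` with `Ψ = {g i} ∪ {χ}`, pooling factor `S` and upper frame bound `B`. -/
structure IsAdmissibleModule {d : ℕ} {ι : Type*} (S L R B : ℝ)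
    (M P : (Ed d → ℂ) → (Ed d → ℂ)) (χ : Ed d → ℂ) (g : ι → Ed d → ℂ) : Prop where
  scale_pos : 0 < S
  memLp_χ : MemLp χ 2 volume
  memLp_g : ∀ i, MemLp (g i) 2 volume
  frame_le : ∀ f, MemLp f 2 volume →
    eLpNorm (convol f χ) 2 volume ^ 2 + ∑' i, eLpNorm (convol f (g i)) 2 volume ^ 2 ≤
      ENNReal.ofReal B * eLpNorm f 2 volume ^ 2
  memLp_M : ∀ f, MemLp f 2 volume → MemLp (M f) 2 volume
  memLp_P : ∀ f, MemLp f 2 volume → MemLp (P f) 2 volume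
  lipschitz_M : ∀ f h, MemLp f 2 volume → MemLp h 2 volume →
    eLpNorm (M f - M h) 2 volume ≤ ENNReal.ofReal L * eLpNorm (f - h) 2 volume
  lipschitz_P : ∀ f h, MemLp f 2 volume → MemLp h 2 volume →
    eLpNorm (P f - P h) 2 volume ≤ ENNReal.ofReal R * eLpNorm (f - h) 2 volume
  L_nonneg : 0 ≤ L
  R_nonneg : 0 ≤ R
  admissible : max B (B * L ^ 2 * R ^ 2) ≤ 1

namespace IsAdmissibleModule

variable {d : ℕ} {ι : Type*} {S L R B : ℝ} {M P : (Ed d → ℂ) → (Ed d → ℂ)} {χ : Ed d → ℂ}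
  {g : ι → Ed d → ℂ}

theorem frame_sum_lt_top (hΨ : IsAdmissibleModule S L R B M P χ g) {f : Ed d → ℂ}
    (hf : MemLp f 2 volume) :
    eLpNorm (convol f χ) 2 volume ^ 2 + ∑' i, eLpNorm (convol f (g i)) 2 volume ^ 2 < ∞ :=
  (hΨ.frame_le f hf).trans_lt
    (ENNReal.mul_lt_top ENNReal.ofReal_lt_top (ENNReal.pow_lt_top hf.2))

theorem memLp_convol_χ (hΨ : IsAdmissibleModule S L R B M P χ g) {f : Ed d → ℂ}
    (hf : MemLp f 2 volume) : MemLp (convol f χ) 2 volume := by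
  refine ⟨aestronglyMeasurable_convol hf.1 hΨ.memLp_χ.1, ?_⟩
  simpa using le_self_add.trans_lt (hΨ.frame_sum_lt_top hf)

theorem memLp_convol_g (hΨ : IsAdmissibleModule S L R B M P χ g) {f : Ed d → ℂ}
    (hf : MemLp f 2 volume) (i : ι) : MemLp (convol f (g i)) 2 volume := by
  refine ⟨aestronglyMeasurable_convol hf.1 (hΨ.memLp_g i).1, ?_⟩
  simpa using ((ENNReal.le_tsum i).trans le_add_self).trans_lt (hΨ.frame_sum_lt_top hf)

theorem memLp_layerU (hΨ : IsAdmissibleModule S L R B M P χ g) {f : Ed d → ℂ}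
    (hf : MemLp f 2 volume) (i : ι) : MemLp (layerU S P M (g i) f) 2 volume :=
  _root_.memLp_layerU hΨ.scale_pos (hΨ.memLp_P _ (hΨ.memLp_M _ (hΨ.memLp_convol_g hf i)))

theorem eLpNorm_layerU_sub_le (hΨ : IsAdmissibleModule S L R B M P χ g) {F H : Ed d → ℂ}
    (hF : MemLp F 2 volume) (hH : MemLp H 2 volume) (i : ι) :
    eLpNorm (layerU S P M (g i) F - layerU S P M (g i) H) 2 volume ≤
      ENNReal.ofReal R * (ENNReal.ofReal L * eLpNorm (convol (F - H) (g i)) 2 volume) := by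
  have hMF := hΨ.memLp_M _ (hΨ.memLp_convol_g hF i)
  have hMH := hΨ.memLp_M _ (hΨ.memLp_convol_g hH i)
  rw [eLpNorm_layerU_sub hΨ.scale_pos (hΨ.memLp_P _ hMF) (hΨ.memLp_P _ hMH),
    sub_convol hF hH (hΨ.memLp_g i)]
  exact (hΨ.lipschitz_P _ _ hMF hMH).trans (mul_le_mul_right (hΨ.lipschitz_M _ _
    (hΨ.memLp_convol_g hF i) (hΨ.memLp_convol_g hH i)) _)

theorem energy_le (hΨ : IsAdmissibleModule S L R B M P χ g) {F H : Ed d → ℂ}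
    (hF : MemLp F 2 volume) (hH : MemLp H 2 volume) :
    eLpNorm (convol F χ - convol H χ) 2 volume ^ 2 +
        ∑' i, eLpNorm (layerU S P M (g i) F - layerU S P M (g i) H) 2 volume ^ 2 ≤
      eLpNorm (F - H) 2 volume ^ 2 := by
  set K := ENNReal.ofReal (L ^ 2 * R ^ 2)
  set c := eLpNorm (convol (F - H) χ) 2 volume ^ 2
  set s := ∑' i, eLpNorm (convol (F - H) (g i)) 2 volume ^ 2
  have hlayer : ∀ i, eLpNorm (layerU S P M (g i) F - layerU S P M (g i) H) 2 volume ^ 2 ≤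
      K * eLpNorm (convol (F - H) (g i)) 2 volume ^ 2 := fun i => by
    refine (pow_le_pow_left₀ zero_le (hΨ.eLpNorm_layerU_sub_le hF hH i) 2).trans_eq ?_
    rw [mul_pow, mul_pow, ← ENNReal.ofReal_pow hΨ.R_nonneg, ← ENNReal.ofReal_pow hΨ.L_nonneg,
      ← mul_assoc, ← ENNReal.ofReal_mul (by positivity), mul_comm (R ^ 2)]
  have hKB : max 1 K * ENNReal.ofReal B ≤ 1 := by
    rw [max_mul, one_mul, ← ENNReal.ofReal_mul (by positivity), ← ENNReal.ofReal_one,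
      ← ENNReal.ofReal_max, mul_comm (L ^ 2 * R ^ 2), ← mul_assoc]
    exact ENNReal.ofReal_le_ofReal hΨ.admissible
  rw [← sub_convol hF hH hΨ.memLp_χ]
  calc c + ∑' i, eLpNorm (layerU S P M (g i) F - layerU S P M (g i) H) 2 volume ^ 2
      ≤ c + K * s := by
        rw [← ENNReal.tsum_mul_left]
        exact add_le_add_right (ENNReal.tsum_le_tsum hlayer) c
    _ ≤ max 1 K * (c + s) := by
        rw [mul_add]
        exact add_le_add (le_mul_of_one_le_left zero_le (le_max_left _ _))
          (mul_le_mul_left (le_max_right _ _) _)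
    _ ≤ max 1 K * (ENNReal.ofReal B * eLpNorm (F - H) 2 volume ^ 2) :=
        mul_le_mul_right (hΨ.frame_le _ (hF.sub hH)) _
    _ ≤ eLpNorm (F - H) 2 volume ^ 2 := by
        rw [← mul_assoc]
        exact mul_le_of_le_one_left zero_le hKB

end IsAdmissibleModule

section Paths

variable {d : ℕ} {Λ : ℕ → Type} {g : (n : ℕ) → Λ n → Ed d → ℂ} {χ : ℕ → Ed d → ℂ}
  {S L R B : ℕ → ℝ} {M P : ℕ → (Ed d → ℂ) → (Ed d → ℂ)}

theorem pathU_zero (q : (k : Fin 0) → Λ k.1) (f : Ed d → ℂ) :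
    pathU Λ g M P S 0 q f = f :=
  Fin.foldl_zero _ _

theorem pathU_snoc {n : ℕ} (q : (k : Fin n) → Λ k.1) (lam : Λ n) (f : Ed d → ℂ) :
    pathU Λ g M P S (n + 1) (Fin.snoc (α := fun k : Fin (n + 1) => Λ k.1) q lam) f
      = layerU (S n) (P n) (M n) (g n lam) (pathU Λ g M P S n q f) := by
  rw [pathU, Fin.foldl_succ_last]
  simp only [Fin.snoc_last, Fin.snoc_castSucc]
  rfl

theorem memLp_pathU
    (hΩ : ∀ n, IsAdmissibleModule (S n) (L n) (R n) (B n) (M n) (P n) (χ n) (g n))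
    (n : ℕ) (q : (k : Fin n) → Λ k.1) {f : Ed d → ℂ} (hf : MemLp f 2 volume) :
    MemLp (pathU Λ g M P S n q f) 2 volume := by
  induction n with
  | zero => rwa [pathU_zero]
  | succ n ih =>
    rw [← Fin.snoc_init_self q, pathU_snoc]
    exact (hΩ n).memLp_layerU (ih _) _

theorem tsum_output_add_tsum_pathU_succ_le
    (hΩ : ∀ n, IsAdmissibleModule (S n) (L n) (R n) (B n) (M n) (P n) (χ n) (g n))
    (n : ℕ) {f h : Ed d → ℂ} (hf : MemLp f 2 volume) (hh : MemLp h 2 volume) :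
    ∑' q : (k : Fin n) → Λ k.1, eLpNorm (convol (pathU Λ g M P S n q f) (χ n) -
        convol (pathU Λ g M P S n q h) (χ n)) 2 volume ^ 2 +
      ∑' q : (k : Fin (n + 1)) → Λ k.1,
        eLpNorm (pathU Λ g M P S (n + 1) q f - pathU Λ g M P S (n + 1) q h) 2 volume ^ 2 ≤
    ∑' q : (k : Fin n) → Λ k.1,
      eLpNorm (pathU Λ g M P S n q f - pathU Λ g M P S n q h) 2 volume ^ 2 := by
  rw [ENNReal.tsum_pi_fin_succ]
  refine ENNReal.tsum_add.symm.trans_le (ENNReal.tsum_le_tsum fun q => ?_)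
  simp only [pathU_snoc]
  exact (hΩ n).energy_le (memLp_pathU hΩ n q hf) (memLp_pathU hΩ n q hh)

end Paths

theorem stmt_12_general {d : ℕ}
    {Λ : ℕ → Type}
    (g : (n : ℕ) → Λ n → Ed d → ℂ) (χ : ℕ → Ed d → ℂ)
    (A B L R S : ℕ → ℝ)
    (M P : ℕ → (Ed d → ℂ) → (Ed d → ℂ))
    (hg2 : ∀ n lam, MemLp (g n lam) 2 volume)
    (hχ2 : ∀ n, MemLp (χ n) 2 volume)
    (hL : ∀ n, 0 ≤ L n) (hR : ∀ n, 0 ≤ R n)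
    (hS : ∀ n, 1 ≤ S n)
    (hframe : ∀ (n : ℕ) (f : Ed d → ℂ), MemLp f 2 volume →
      ENNReal.ofReal (A n) * eLpNorm f 2 volume ^ 2 ≤
          eLpNorm (convol f (χ n)) 2 volume ^ 2 +
            ∑' lam : Λ n, eLpNorm (convol f (g n lam)) 2 volume ^ 2 ∧
        eLpNorm (convol f (χ n)) 2 volume ^ 2 +
            ∑' lam : Λ n, eLpNorm (convol f (g n lam)) 2 volume ^ 2 ≤
          ENNReal.ofReal (B n) * eLpNorm f 2 volume ^ 2)
    (hMmem : ∀ (n : ℕ) (f : Ed d → ℂ), MemLp f 2 volume → MemLp (M n f) 2 volume)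
    (hPmem : ∀ (n : ℕ) (f : Ed d → ℂ), MemLp f 2 volume → MemLp (P n f) 2 volume)
    (hMlip : ∀ (n : ℕ) (f h : Ed d → ℂ), MemLp f 2 volume → MemLp h 2 volume →
      eLpNorm (M n f - M n h) 2 volume ≤ ENNReal.ofReal (L n) * eLpNorm (f - h) 2 volume)
    (hPlip : ∀ (n : ℕ) (f h : Ed d → ℂ), MemLp f 2 volume → MemLp h 2 volume →
      eLpNorm (P n f - P n h) 2 volume ≤ ENNReal.ofReal (R n) * eLpNorm (f - h) 2 volume)
    (hadm : ∀ n, max (B n) (B n * L n ^ 2 * R n ^ 2) ≤ 1) :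
    ∀ f h : Ed d → ℂ, MemLp f 2 volume → MemLp h 2 volume →
      (∑' n : ℕ, ∑' (q : (k : Fin n) → Λ k.1),
          eLpNorm (convol (pathU Λ g M P S n q f) (χ n) -
            convol (pathU Λ g M P S n q h) (χ n)) 2 volume ^ 2) ^ (1 / 2 : ℝ) ≤
        eLpNorm (f - h) 2 volume := by
  have hΩ : ∀ n, IsAdmissibleModule (S n) (L n) (R n) (B n) (M n) (P n) (χ n) (g n) :=
    fun n => ⟨zero_lt_one.trans_le (hS n), hχ2 n, hg2 n, fun f hf => (hframe n f hf).2,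
      hMmem n, hPmem n, hMlip n, hPlip n, hL n, hR n, hadm n⟩
  intro f h hf hh
  have henergy : ∑' n : ℕ, ∑' q : (k : Fin n) → Λ k.1,
      eLpNorm (convol (pathU Λ g M P S n q f) (χ n) -
        convol (pathU Λ g M P S n q h) (χ n)) 2 volume ^ 2 ≤ eLpNorm (f - h) 2 volume ^ 2 := by
    refine (ENNReal.tsum_le_of_add_le
      fun n => tsum_output_add_tsum_pathU_succ_le hΩ n hf hh).trans_eq ?_
    simp only [pathU_zero]
    exact (hasSum_unique _).tsum_eq
  rwa [one_div, ENNReal.rpow_inv_le_iff two_pos, ENNReal.rpow_two]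

/-- The feature extractor of an admissible module-sequence is Lipschitz-continuous
with Lipschitz constant 1. -/
theorem stmt_12 {d : ℕ}
    {Λ : ℕ → Type} [∀ n, Countable (Λ n)]
    (g : (n : ℕ) → Λ n → Ed d → ℂ) (χ : ℕ → Ed d → ℂ)
    (A B L R S : ℕ → ℝ)
    (M P : ℕ → (Ed d → ℂ) → (Ed d → ℂ))
    (hg1 : ∀ n lam, MemLp (g n lam) 1 volume) (hg2 : ∀ n lam, MemLp (g n lam) 2 volume)
    (hχ1 : ∀ n, MemLp (χ n) 1 volume) (hχ2 : ∀ n, MemLp (χ n) 2 volume)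
    (hA : ∀ n, 0 < A n) (hB : ∀ n, 0 < B n) (hL : ∀ n, 0 ≤ L n) (hR : ∀ n, 0 ≤ R n)
    (hS : ∀ n, 1 ≤ S n)
    (hframe : ∀ (n : ℕ) (f : Ed d → ℂ), MemLp f 2 volume →
      ENNReal.ofReal (A n) * eLpNorm f 2 volume ^ 2 ≤
          eLpNorm (convol f (χ n)) 2 volume ^ 2 +
            ∑' lam : Λ n, eLpNorm (convol f (g n lam)) 2 volume ^ 2 ∧
        eLpNorm (convol f (χ n)) 2 volume ^ 2 +
            ∑' lam : Λ n, eLpNorm (convol f (g n lam)) 2 volume ^ 2 ≤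
          ENNReal.ofReal (B n) * eLpNorm f 2 volume ^ 2)
    (hMmem : ∀ (n : ℕ) (f : Ed d → ℂ), MemLp f 2 volume → MemLp (M n f) 2 volume)
    (hPmem : ∀ (n : ℕ) (f : Ed d → ℂ), MemLp f 2 volume → MemLp (P n f) 2 volume)
    (hMlip : ∀ (n : ℕ) (f h : Ed d → ℂ), MemLp f 2 volume → MemLp h 2 volume →
      eLpNorm (M n f - M n h) 2 volume ≤ ENNReal.ofReal (L n) * eLpNorm (f - h) 2 volume)
    (hPlip : ∀ (n : ℕ) (f h : Ed d → ℂ), MemLp f 2 volume → MemLp h 2 volume →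
      eLpNorm (P n f - P n h) 2 volume ≤ ENNReal.ofReal (R n) * eLpNorm (f - h) 2 volume)
    (hM0 : ∀ n, M n 0 = 0) (hP0 : ∀ n, P n 0 = 0)
    (hadm : ∀ n, max (B n) (B n * L n ^ 2 * R n ^ 2) ≤ 1) :
    ∀ f h : Ed d → ℂ, MemLp f 2 volume → MemLp h 2 volume →
      (∑' n : ℕ, ∑' (q : (k : Fin n) → Λ k.1),
          eLpNorm (convol (pathU Λ g M P S n q f) (χ n) -
            convol (pathU Λ g M P S n q h) (χ n)) 2 volume ^ 2) ^ (1 / 2 : ℝ) ≤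
        eLpNorm (f - h) 2 volume :=
  stmt_12_general g χ A B L R S M P hg2 hχ2 hL hR hS hframe hMmem hPmem hMlip hPlip hadm
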